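/- arXiv:1802.08586 — 9 statements merged into one kernel-verified Lean document; each statement's English description precedes it below -/
import Mathlib

section
/- An aggregation procedure F : D(U)^n → D(U) satisfies anonymity, independence, and monotonicity if and only if it is a quota rule, i.e., there exist functions q_P : U^q → {0,1,...,n+1} for each relation symbol P such that a tuple u is in F(D⃗)(P) iff the number of agents i with u ∈ D_i(P) is at least q_P(u). -/
/-- A relational database schema: a collection of relation symbols with arities. -/
structure Schema where
  Sym : Type
  arity : Sym → ℕ

/-- A database instance: each relation symbol is interpreted as a set of tuples. -/
def DBInstance (S : Schema) (U : Type) : Type :=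
  ∀ P : S.Sym, Set (Fin (S.arity P) → U)

/-- Anonymity: the aggregator is invariant under permutations of the agents. -/
def Anonymous {S : Schema} {U : Type} {n : ℕ}
    (F : (Fin n → DBInstance S U) → DBInstance S U) : Prop :=
  ∀ (π : Equiv.Perm (Fin n)) (D : Fin n → DBInstance S U),
    F (fun i => D (π i)) = F D

/-- Independence: acceptance of a tuple depends only on its set of supporters. -/
def Independent {S : Schema} {U : Type} {n : ℕ}
    (F : (Fin n → DBInstance S U) → DBInstance S U) : Prop :=
  ∀ (D D' : Fin n → DBInstance S U) (P : S.Sym) (u : Fin (S.arity P) → U),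
    {i : Fin n | u ∈ D i P} = {i : Fin n | u ∈ D' i P} →
      (u ∈ F D P ↔ u ∈ F D' P)

/-- Monotonicity: if a tuple is collectively accepted and each agent either keeps the
same interpretation of `P` or adds the tuple (and possibly more), it stays accepted. -/
def MonotoneAgg {S : Schema} {U : Type} {n : ℕ}
    (F : (Fin n → DBInstance S U) → DBInstance S U) : Prop :=
  ∀ (D D' : Fin n → DBInstance S U) (P : S.Sym) (u : Fin (S.arity P) → U),
    u ∈ F D P →
    (∀ i : Fin n, D i P = D' i P ∨ D i P ∪ {u} ⊆ D' i P) →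
    u ∈ F D' P

/-- Quota rules: a tuple is accepted iff the number of supporting agents reaches the quota. -/
def IsQuotaRule {S : Schema} {U : Type} {n : ℕ}
    (F : (Fin n → DBInstance S U) → DBInstance S U) : Prop :=
  ∃ q : ∀ P : S.Sym, (Fin (S.arity P) → U) → ℕ,
    (∀ (P : S.Sym) (u : Fin (S.arity P) → U), q P u ≤ n + 1) ∧
    ∀ (D : Fin n → DBInstance S U) (P : S.Sym) (u : Fin (S.arity P) → U),
      u ∈ F D P ↔ q P u ≤ Nat.card {i : Fin n // u ∈ D i P}

namespace QuotaAux

lemma exists_perm_mapsTo {n : ℕ} (A B : Set (Fin n)) (h : Nat.card A = Nat.card B) :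
    ∃ π : Equiv.Perm (Fin n), ∀ i, π i ∈ B ↔ i ∈ A := by
  classical
  have hA : Fintype.card A = Fintype.card B := by
    simpa [Nat.card_eq_fintype_card] using h
  have hC : Fintype.card {x : Fin n // ¬ x ∈ A} = Fintype.card {x : Fin n // ¬ x ∈ B} := by
    rw [Fintype.card_subtype_compl, Fintype.card_subtype_compl]
    rw [show Fintype.card {x : Fin n // x ∈ A} = Fintype.card {x : Fin n // x ∈ B} from hA]
  let e1 : {x : Fin n // x ∈ A} ≃ {x : Fin n // x ∈ B} := Fintype.equivOfCardEq hA
  let e2 := Fintype.equivOfCardEq hC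
  refine ⟨Equiv.subtypeCongr e1 e2, fun i => ?_⟩
  by_cases hi : i ∈ A
  · simp only [Equiv.subtypeCongr, Equiv.trans_apply,
      Equiv.sumCompl_symm_apply_of_pos hi, Equiv.sumCongr_apply, Sum.map_inl,
      Equiv.sumCompl_apply_inl]
    exact iff_of_true (e1 ⟨i, hi⟩).2 hi
  · simp only [Equiv.subtypeCongr, Equiv.trans_apply,
      Equiv.sumCompl_symm_apply_of_neg hi, Equiv.sumCongr_apply, Sum.map_inr,
      Equiv.sumCompl_apply_inr]
    exact iff_of_false (e2 ⟨i, hi⟩).2 hi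

variable {S : Schema} {U : Type} {n : ℕ}

/-- Canonical profile: agents in `A` support exactly the tuple `u` (at every symbol),
others support nothing. -/
def prof (P : S.Sym) (u : Fin (S.arity P) → U) (A : Set (Fin n)) :
    Fin n → DBInstance S U :=
  fun i _Q => {v | i ∈ A ∧ HEq v u}

lemma mem_prof {P : S.Sym} {u : Fin (S.arity P) → U} {A : Set (Fin n)} {i : Fin n} :
    u ∈ prof P u A i P ↔ i ∈ A := by
  simp [prof]

lemma supporters_prof (P : S.Sym) (u : Fin (S.arity P) → U) (A : Set (Fin n)) :
    {i : Fin n | u ∈ prof P u A i P} = A := by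
  ext i; exact mem_prof

/-- Canonical set of agents of size `k`. -/
def canon (n k : ℕ) : Set (Fin n) := {i | (i : ℕ) < k}

lemma card_canon {k : ℕ} (hk : k ≤ n) : Nat.card (canon n k) = k := by
  have e : canon n k ≃ Fin k :=
    ⟨fun i => ⟨i.1, i.2⟩, fun j => ⟨⟨j.1, lt_of_lt_of_le j.2 hk⟩, j.2⟩,
      fun i => rfl, fun j => rfl⟩
  rw [Nat.card_congr e, Nat.card_eq_fintype_card, Fintype.card_fin]

lemma canon_mono {k m : ℕ} (h : k ≤ m) : canon n k ⊆ canon n m :=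
  fun _ hi => lt_of_lt_of_le hi h

section Main

variable {F : (Fin n → DBInstance S U) → DBInstance S U}
variable (P : S.Sym) (u : Fin (S.arity P) → U)

lemma accept_card_congr (hanon : Anonymous F) (hind : Independent F) (A B : Set (Fin n)) (h : Nat.card A = Nat.card B) :
    u ∈ F (prof P u A) P ↔ u ∈ F (prof P u B) P := by
  obtain ⟨π, hπ⟩ := exists_perm_mapsTo A B h
  have h1 : F (fun i => prof P u B (π i)) = F (prof P u B) := hanon π (prof P u B)
  have h2 : {i : Fin n | u ∈ prof P u B (π i) P} = {i : Fin n | u ∈ prof P u A i P} := by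
    ext i
    simp only [Set.mem_setOf_eq, mem_prof, hπ]
  calc u ∈ F (prof P u A) P ↔ u ∈ F (fun i => prof P u B (π i)) P :=
        (hind _ _ P u h2).symm
    _ ↔ u ∈ F (prof P u B) P := by rw [h1]

lemma accept_mono (hmono : MonotoneAgg F) {A B : Set (Fin n)} (hAB : A ⊆ B)
    (h : u ∈ F (prof P u A) P) : u ∈ F (prof P u B) P := by
  refine hmono _ _ P u h fun i => ?_
  by_cases hi : i ∈ B
  · right
    rintro v (⟨_, hv⟩ | hv)
    · exact ⟨hi, hv⟩
    · exact ⟨hi, heq_of_eq hv⟩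
  · left
    have hiA : i ∉ A := fun h' => hi (hAB h')
    ext v
    simp [prof, hi, hiA]

lemma mem_iff_accept_supporters (hind : Independent F) (D : Fin n → DBInstance S U) :
    u ∈ F D P ↔ u ∈ F (prof P u {i | u ∈ D i P}) P :=
  hind D _ P u (supporters_prof P u _).symm

lemma exists_quota (hanon : Anonymous F) (hind : Independent F) (hmono : MonotoneAgg F) :
    ∃ q : ℕ, q ≤ n + 1 ∧
      ∀ D : Fin n → DBInstance S U,
        u ∈ F D P ↔ q ≤ Nat.card {i : Fin n // u ∈ D i P} := by
  classical
  have card_le : ∀ D : Fin n → DBInstance S U,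
      Nat.card {i : Fin n // u ∈ D i P} ≤ n := fun D => by
    have := Nat.card_le_card_of_injective
      (Subtype.val : {i : Fin n // u ∈ D i P} → Fin n) Subtype.val_injective
    simpa using this
  have key : ∀ D : Fin n → DBInstance S U,
      u ∈ F D P ↔ u ∈ F (prof P u (canon n (Nat.card {i : Fin n // u ∈ D i P}))) P := by
    intro D
    rw [mem_iff_accept_supporters P u hind D]
    exact accept_card_congr P u hanon hind _ _
      (by rw [card_canon (card_le D)]; rfl)
  by_cases hn : u ∈ F (prof P u (canon n n)) P
  · have hex : ∃ k, u ∈ F (prof P u (canon n k)) P := ⟨n, hn⟩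
    refine ⟨Nat.find hex, le_trans (Nat.find_le hn) (Nat.le_succ n), fun D => ?_⟩
    rw [key D]
    constructor
    · intro h
      exact Nat.find_le h
    · intro h
      exact accept_mono P u hmono (canon_mono h) (Nat.find_spec hex)
  · refine ⟨n + 1, le_refl _, fun D => ?_⟩
    constructor
    · intro h
      exact absurd (accept_mono P u hmono (canon_mono (card_le D)) ((key D).mp h)) hn
    · intro h
      exact absurd (le_trans h (card_le D)) (by omega)

end Main

end QuotaAux

/-- An aggregation procedure satisfies anonymity, independence and monotonicity
iff it is a quota rule. -/
theorem quota_rule_characterization {S : Schema} {U : Type} {n : ℕ}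
    (F : (Fin n → DBInstance S U) → DBInstance S U) :
    (Anonymous F ∧ Independent F ∧ MonotoneAgg F) ↔ IsQuotaRule F := by
  constructor
  · rintro ⟨hanon, hind, hmono⟩
    have key := fun (P : S.Sym) (u : Fin (S.arity P) → U) =>
      QuotaAux.exists_quota P u hanon hind hmono
    choose q hq1 hq2 using key
    exact ⟨q, hq1, fun D P u => hq2 P u D⟩
  · rintro ⟨q, _hq, hmem⟩
    refine ⟨?_, ?_, ?_⟩
    · intro π D
      funext P
      ext u
      rw [hmem, hmem]
      have : Nat.card {i : Fin n // u ∈ D (π i) P} = Nat.card {i : Fin n // u ∈ D i P} :=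
        Nat.card_congr (Equiv.subtypeEquiv π fun i => Iff.rfl)
      rw [this]
    · intro D D' P u h
      rw [hmem, hmem]
      have h' : ∀ i, u ∈ D i P ↔ u ∈ D' i P := fun i => Set.ext_iff.mp h i
      rw [Nat.card_congr (Equiv.subtypeEquivRight h')]
    · intro D D' P u hu hcond
      rw [hmem] at hu ⊢
      have keep : ∀ i, u ∈ D i P → u ∈ D' i P := by
        intro i hi
        rcases hcond i with h | h
        · exact h ▸ hi
        · exact h (Or.inl hi)
      refine le_trans hu (Nat.card_le_card_of_injective
        (fun i : {i : Fin n // u ∈ D i P} =>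
          (⟨i.1, keep i.1 i.2⟩ : {i : Fin n // u ∈ D' i P})) ?_)
      intro a b hab
      exact Subtype.ext (by simpa using hab)
end

section
/- For an odd number of agents and in the absence of integrity constraints, the distance-based aggregation rule, which for each relation symbol P outputs a finite set A ⊆ U^q minimizing the sum over agents i of the symmetric difference |D_i(P) Δ A|, coincides with the majority rule: u ∈ F(D⃗)(P) iff a strict majority of agents have u ∈ D_i(P). -/
/-- A database instance with explicitly finite relations. -/
def FinDBInstance (S : Schema) (U : Type) [DecidableEq U] : Type :=
  ∀ P : S.Sym, Finset (Fin (S.arity P) → U)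

/-- For an odd number of agents and in the absence of integrity constraints, any
finite set `A` minimizing the sum over agents of the symmetric-difference distance
to `D i P` is exactly the set of tuples supported by a strict majority of agents. -/
theorem distance_based_eq_majority {S : Schema} {U : Type} [DecidableEq U] {n : ℕ}
    (hn : Odd n) (D : Fin n → FinDBInstance S U) (P : S.Sym)
    (A : Finset (Fin (S.arity P) → U))
    (hmin : ∀ B : Finset (Fin (S.arity P) → U),
      ∑ i : Fin n, ((D i P \ A).card + (A \ D i P).card) ≤
        ∑ i : Fin n, ((D i P \ B).card + (B \ D i P).card)) :
    ∀ u : Fin (S.arity P) → U,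
      u ∈ A ↔ (n + 1) / 2 ≤ (Finset.univ.filter (fun i : Fin n => u ∈ D i P)).card := by
  classical
  intro u
  obtain ⟨k, hk⟩ := hn
  have hsplit : (Finset.univ.filter fun i : Fin n => u ∈ D i P).card
      + (Finset.univ.filter fun i : Fin n => ¬ u ∈ D i P).card = n := by
    rw [Finset.card_filter_add_card_filter_not]
    simp
  set S1 := Finset.univ.filter fun i : Fin n => u ∈ D i P with hS1
  set S2 := Finset.univ.filter fun i : Fin n => ¬ u ∈ D i P with hS2
  set a : Fin n → ℕ := fun i => (D i P \ A).card + (A \ D i P).card with ha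
  constructor
  · intro hu
    set b : Fin n → ℕ := fun i => (D i P \ A.erase u).card + (A.erase u \ D i P).card with hb
    have key : (∑ i ∈ S1, a i) + (∑ i ∈ S2, a i) ≤ (∑ i ∈ S1, b i) + (∑ i ∈ S2, b i) := by
      rw [Finset.sum_filter_add_sum_filter_not, Finset.sum_filter_add_sum_filter_not]
      exact hmin (A.erase u)
    have hab1 : ∀ i ∈ S1, b i = a i + 1 := by
      intro i hi
      simp only [hS1, Finset.mem_filter] at hi
      have hD := hi.2
      have e1 : D i P \ A.erase u = insert u (D i P \ A) := by
        ext x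
        by_cases hx : x = u
        · subst hx; simp [hD, hu]
        · simp [hx, Finset.mem_erase]
      have e2 : A.erase u \ D i P = A \ D i P := by
        ext x
        by_cases hx : x = u
        · subst hx; simp [hD]
        · simp [hx, Finset.mem_erase]
      simp only [hb, ha, e1, e2, Finset.card_insert_of_notMem (by simp [hu] :
        u ∉ D i P \ A)]
      omega
    have hab2 : ∀ i ∈ S2, a i = b i + 1 := by
      intro i hi
      simp only [hS2, Finset.mem_filter] at hi
      have hD := hi.2
      have e1 : D i P \ A.erase u = D i P \ A := by
        ext x
        by_cases hx : x = u
        · subst hx; simp [hD]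
        · simp [hx, Finset.mem_erase]
      have e2 : A \ D i P = insert u (A.erase u \ D i P) := by
        ext x
        by_cases hx : x = u
        · subst hx; simp [hD, hu]
        · simp [hx, Finset.mem_erase]
      simp only [hb, ha, e1, e2, Finset.card_insert_of_notMem (by simp :
        u ∉ A.erase u \ D i P)]
      omega
    have h1 : ∑ i ∈ S1, b i = (∑ i ∈ S1, a i) + S1.card := by
      rw [Finset.sum_congr rfl hab1, Finset.sum_add_distrib, Finset.sum_const,
        smul_eq_mul, mul_one]
    have h2 : ∑ i ∈ S2, a i = (∑ i ∈ S2, b i) + S2.card := by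
      rw [Finset.sum_congr rfl hab2, Finset.sum_add_distrib, Finset.sum_const,
        smul_eq_mul, mul_one]
    have hle : S2.card ≤ S1.card := by omega
    omega
  · intro hmaj
    by_contra hu
    set b : Fin n → ℕ := fun i => (D i P \ insert u A).card + (insert u A \ D i P).card with hb
    have key : (∑ i ∈ S1, a i) + (∑ i ∈ S2, a i) ≤ (∑ i ∈ S1, b i) + (∑ i ∈ S2, b i) := by
      rw [Finset.sum_filter_add_sum_filter_not, Finset.sum_filter_add_sum_filter_not]
      exact hmin (insert u A)
    have hab1 : ∀ i ∈ S1, a i = b i + 1 := by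
      intro i hi
      simp only [hS1, Finset.mem_filter] at hi
      have hD := hi.2
      have e1 : D i P \ A = insert u (D i P \ insert u A) := by
        ext x
        by_cases hx : x = u
        · subst hx; simp [hD, hu]
        · simp [hx]
      have e2 : insert u A \ D i P = A \ D i P := by
        ext x
        by_cases hx : x = u
        · subst hx; simp [hD]
        · simp [hx]
      simp only [hb, ha, e1, e2, Finset.card_insert_of_notMem (by simp :
        u ∉ D i P \ insert u A)]
      omega
    have hab2 : ∀ i ∈ S2, b i = a i + 1 := by
      intro i hi
      simp only [hS2, Finset.mem_filter] at hi
      have hD := hi.2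
      have e1 : D i P \ insert u A = D i P \ A := by
        ext x
        by_cases hx : x = u
        · subst hx; simp [hD]
        · simp [hx]
      have e2 : insert u A \ D i P = insert u (A \ D i P) := by
        ext x
        by_cases hx : x = u
        · subst hx; simp [hD]
        · simp [hx]
      simp only [hb, ha, e1, e2, Finset.card_insert_of_notMem (by simp [hu] :
        u ∉ A \ D i P)]
      omega
    have h1 : ∑ i ∈ S1, a i = (∑ i ∈ S1, b i) + S1.card := by
      rw [Finset.sum_congr rfl hab1, Finset.sum_add_distrib, Finset.sum_const,
        smul_eq_mul, mul_one]
    have h2 : ∑ i ∈ S2, b i = (∑ i ∈ S2, a i) + S2.card := by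
      rw [Finset.sum_congr rfl hab2, Finset.sum_add_distrib, Finset.sum_const,
        smul_eq_mul, mul_one]
    have hle : S1.card ≤ S2.card := by omega
    omega
end

section
/- If an aggregation procedure F satisfies unanimity on the class of instances satisfying all positive ground literals in a language lit⁺, then F is collectively rational with respect to lit⁺; conversely, if F is collectively rational with respect to lit⁺ and the set of constants includes all individuals in the domain, then F is unanimous. -/
/-- Unanimity: every tuple accepted by all agents is collectively accepted. -/
def Unanimous {S : Schema} {U : Type} {n : ℕ}
    (F : (Fin n → DBInstance S U) → DBInstance S U) : Prop :=
  ∀ (D : Fin n → DBInstance S U) (P : S.Sym), (⋂ i, D i P) ⊆ F D P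

/-- Unanimity restricted to profiles of instances drawn from the class `A`. -/
def UnanimousOn {S : Schema} {U : Type} {n : ℕ} (A : Set (DBInstance S U))
    (F : (Fin n → DBInstance S U) → DBInstance S U) : Prop :=
  ∀ D : Fin n → DBInstance S U, (∀ i, D i ∈ A) →
    ∀ P : S.Sym, (⋂ i, D i P) ⊆ F D P

/-- Lit⁺ characterisation: if `F` is unanimous on the models of each positive ground
literal `P(c₁,…,c_q)` with constants from `Con`, then `F` is collectively rational
w.r.t. each such literal; conversely, if `F` is collectively rational w.r.t. all
positive ground literals and `Con` contains the whole domain, then `F` is unanimous. -/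
theorem unanimity_lit_pos {S : Schema} {U : Type} {n : ℕ} (Con : Set U)
    (F : (Fin n → DBInstance S U) → DBInstance S U) :
    ((∀ (P : S.Sym) (c : Fin (S.arity P) → U), (∀ i, c i ∈ Con) →
        UnanimousOn {D | c ∈ D P} F) →
      (∀ (P : S.Sym) (c : Fin (S.arity P) → U), (∀ i, c i ∈ Con) →
        ∀ D : Fin n → DBInstance S U, (∀ i, c ∈ D i P) → c ∈ F D P)) ∧
    ((∀ (P : S.Sym) (c : Fin (S.arity P) → U), (∀ i, c i ∈ Con) →
        ∀ D : Fin n → DBInstance S U, (∀ i, c ∈ D i P) → c ∈ F D P) →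
      Con = Set.univ → Unanimous F) := by
  constructor
  · intro h P c hc D hD
    exact h P c hc D hD P (Set.mem_iInter.mpr hD)
  · intro h hCon D P x hx
    exact h P x (fun i => hCon ▸ Set.mem_univ _) D (fun i => Set.mem_iInter.mp hx i)
end

section
/- If an aggregation procedure F satisfies groundedness on the class of instances satisfying all negative ground literals in a language lit⁻, then F is collectively rational with respect to lit⁻; conversely, if F is collectively rational with respect to lit⁻ and the set of constants includes all individuals in the domain, then F is grounded. -/
/-- Groundedness: every collectively accepted tuple is accepted by some agent. -/
def Grounded {S : Schema} {U : Type} {n : ℕ}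
    (F : (Fin n → DBInstance S U) → DBInstance S U) : Prop :=
  ∀ (D : Fin n → DBInstance S U) (P : S.Sym), F D P ⊆ ⋃ i, D i P

/-- Groundedness restricted to profiles of instances drawn from the class `A`. -/
def GroundedOn {S : Schema} {U : Type} {n : ℕ} (A : Set (DBInstance S U))
    (F : (Fin n → DBInstance S U) → DBInstance S U) : Prop :=
  ∀ D : Fin n → DBInstance S U, (∀ i, D i ∈ A) →
    ∀ P : S.Sym, F D P ⊆ ⋃ i, D i P

/-- Lit⁻ characterisation: if `F` is grounded on the models of each negative ground
literal `¬P(c₁,…,c_q)` with constants from `Con`, then `F` is collectively rational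
w.r.t. each such literal; conversely, if `F` is collectively rational w.r.t. all
negative ground literals and `Con` contains the whole domain, then `F` is grounded. -/
theorem groundedness_lit_neg {S : Schema} {U : Type} {n : ℕ} (Con : Set U)
    (F : (Fin n → DBInstance S U) → DBInstance S U) :
    ((∀ (P : S.Sym) (c : Fin (S.arity P) → U), (∀ i, c i ∈ Con) →
        GroundedOn {D | c ∉ D P} F) →
      (∀ (P : S.Sym) (c : Fin (S.arity P) → U), (∀ i, c i ∈ Con) →
        ∀ D : Fin n → DBInstance S U, (∀ i, c ∉ D i P) → c ∉ F D P)) ∧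
    ((∀ (P : S.Sym) (c : Fin (S.arity P) → U), (∀ i, c i ∈ Con) →
        ∀ D : Fin n → DBInstance S U, (∀ i, c ∉ D i P) → c ∉ F D P) →
      Con = Set.univ → Grounded F) := by
  constructor
  · intro hG P c hc D hD hmem
    have := hG P c hc D hD P hmem
    simp only [Set.mem_iUnion] at this
    obtain ⟨i, hi⟩ := this
    exact hD i hi
  · intro hCR hCon D P x hx
    simp only [Set.mem_iUnion]
    by_contra h
    push_neg at h
    exact hCR P x (fun i => hCon ▸ Set.mem_univ _) D h hx
end

section
/- Every generalised dictatorship is collectively rational with respect to the full first-order language over the database schema, and the inclusion is strict: there exists an aggregator collectively rational with respect to all first-order sentences that is not a generalised dictatorship. -/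
def adom {S : Schema} {U : Type} (D : DBInstance S U) : Set U :=
  {u | ∃ P, ∃ t ∈ D P, ∃ i, t i = u}

/-- First-order formulas over schema `S` (equality, no function symbols, no
constants), with variables indexed by `ℕ`. -/
inductive FO (S : Schema) : Type
  | atom (P : S.Sym) (t : Fin (S.arity P) → ℕ)
  | eq (x y : ℕ)
  | not (φ : FO S)
  | imp (φ ψ : FO S)
  | all (x : ℕ) (φ : FO S)

/-- Active-domain satisfaction of a first-order formula under assignment `σ`. -/
def FOSat {S : Schema} {U : Type} (D : DBInstance S U) (σ : ℕ → U) : FO S → Prop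
  | .atom P t => (fun i => σ (t i)) ∈ D P
  | .eq x y => σ x = σ y
  | .not φ => ¬ FOSat D σ φ
  | .imp φ ψ => FOSat D σ φ → FOSat D σ ψ
  | .all x φ => ∀ u ∈ adom D, FOSat D (Function.update σ x u) φ

/-- Truth of a formula in an instance: satisfaction under every assignment. -/
def FOTrue {S : Schema} {U : Type} (D : DBInstance S U) (φ : FO S) : Prop :=
  ∀ σ : ℕ → U, FOSat D σ φ

/-- `F` lifts `φ` from the individual to the collective level. -/
def LiftsFO {S : Schema} {U : Type} {n : ℕ}
    (F : (Fin n → DBInstance S U) → DBInstance S U) (φ : FO S) : Prop :=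
  ∀ D : Fin n → DBInstance S U, (∀ i, FOTrue (D i) φ) → FOTrue (F D) φ

/-- Generalised dictatorships: the output is always one of the input instances. -/
def IsGenDict {S : Schema} {U : Type} {n : ℕ}
    (F : (Fin n → DBInstance S U) → DBInstance S U) : Prop :=
  ∃ g : (Fin n → DBInstance S U) → Fin n, ∀ D, F D = D (g D)


def mapD {S : Schema} {U : Type} (e : U ≃ U) (D : DBInstance S U) : DBInstance S U :=
  fun P => (fun t => e ∘ t) '' D P

lemma adom_mapD {S : Schema} {U : Type} (e : U ≃ U) (D : DBInstance S U) :
    adom (mapD e D) = e '' adom D := by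
  ext u
  constructor
  · rintro ⟨P, t, ⟨s, hs, rfl⟩, i, rfl⟩
    exact ⟨s i, ⟨P, s, hs, i, rfl⟩, rfl⟩
  · rintro ⟨v, ⟨P, t, ht, i, rfl⟩, rfl⟩
    exact ⟨P, e ∘ t, ⟨t, ht, rfl⟩, i, rfl⟩

lemma sat_mapD {S : Schema} {U : Type} (e : U ≃ U) (D : DBInstance S U)
    (φ : FO S) : ∀ σ : ℕ → U, FOSat (mapD e D) (e ∘ σ) φ ↔ FOSat D σ φ := by
  induction φ with
  | atom P t =>
    intro σ
    simp only [FOSat, mapD]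
    constructor
    · rintro ⟨s, hs, h⟩
      have : s = fun i => σ (t i) := by
        funext i
        have := congrFun h i
        simpa using e.injective (this)
      rwa [← this]
    · intro h
      exact ⟨fun i => σ (t i), h, rfl⟩
  | eq x y =>
    intro σ
    simp only [FOSat, Function.comp]
    exact ⟨fun h => e.injective h, fun h => by rw [h]⟩
  | not φ ih => intro σ; simp only [FOSat, ih]
  | imp φ ψ ih1 ih2 => intro σ; simp only [FOSat, ih1, ih2]
  | all x φ ih =>
    intro σ
    simp only [FOSat, adom_mapD]
    constructor
    · intro h v hv
      have := h (e v) ⟨v, hv, rfl⟩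
      have hup : Function.update (e ∘ σ) x (e v) = e ∘ Function.update σ x v := by
        funext y
        by_cases hy : y = x
        · subst hy; simp
        · simp [Function.update_of_ne hy]
      rw [hup] at this
      exact (ih _).mp this
    · rintro h u ⟨v, hv, rfl⟩
      have hup : Function.update (e ∘ σ) x (e v) = e ∘ Function.update σ x v := by
        funext y
        by_cases hy : y = x
        · subst hy; simp
        · simp [Function.update_of_ne hy]
      rw [hup]
      exact (ih _).mpr (h v hv)

lemma fotrue_mapD {S : Schema} {U : Type} (e : U ≃ U) (D : DBInstance S U)
    (φ : FO S) (h : FOTrue D φ) : FOTrue (mapD e D) φ := by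
  intro σ
  have : σ = e ∘ (e.symm ∘ σ) := by funext y; simp
  rw [this]
  exact (sat_mapD e D φ _).mpr (h _)

/-- Every generalised dictatorship is collectively rational w.r.t. every
first-order sentence, and the inclusion is strict: some aggregator lifts all
first-order sentences without being a generalised dictatorship. -/
theorem gen_dict_strict_subset_CR {S : Schema} {U : Type} {n : ℕ} (hn : 0 < n)
    (P₀ : S.Sym) (hq : 0 < S.arity P₀) (a b : U) (hab : a ≠ b) :
    (∀ F : (Fin n → DBInstance S U) → DBInstance S U,
      IsGenDict F → ∀ φ : FO S, LiftsFO F φ) ∧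
    (∃ F : (Fin n → DBInstance S U) → DBInstance S U,
      (∀ φ : FO S, LiftsFO F φ) ∧ ¬ IsGenDict F) := by
  constructor
  · rintro F ⟨g, hg⟩ φ D hD σ
    rw [hg D]
    exact hD (g D) σ
  · classical
    refine ⟨fun D => mapD (Equiv.swap a b) (D ⟨0, hn⟩), ?_, ?_⟩
    · intro φ D hD
      exact fotrue_mapD _ _ _ (hD _)
    · rintro ⟨g, hg⟩
      set D0 : DBInstance S U := fun P => {t | ∀ i, t i = a} with hD0
      set Dv : Fin n → DBInstance S U := fun _ => D0 with hDv
      have h := hg Dv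
      have h0 : (fun _ : Fin (S.arity P₀) => b) ∈ mapD (Equiv.swap a b) (Dv ⟨0, hn⟩) P₀ := by
        refine ⟨fun _ => a, fun i => rfl, ?_⟩
        funext i
        simp
      have h' : mapD (Equiv.swap a b) (Dv ⟨0, hn⟩) = Dv (g Dv) := h
      rw [h'] at h0
      have : b = a := h0 ⟨0, hq⟩
      exact hab this.symm
end

section
/- A quota rule lifts a functional dependency n₁,...,n_k ↦ n_{k+1},...,n_q on relation symbol P if and only if its quota satisfies q_P > n/2, where n is the number of agents. -/
/-- `D` satisfies the functional dependency `1,…,k ↦ k+1,…,q` on symbol `P`: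
any two tuples of `D(P)` agreeing on the first `k` coordinates coincide. -/
def SatFD {S : Schema} {U : Type} (P : S.Sym) (k : ℕ) (D : DBInstance S U) : Prop :=
  ∀ u ∈ D P, ∀ v ∈ D P, (∀ i : Fin (S.arity P), (i : ℕ) < k → u i = v i) → u = v

/-- The quota rule determined by a quota for each relation symbol. -/
def quotaRule {S : Schema} {U : Type} {n : ℕ} (q : S.Sym → ℕ)
    (D : Fin n → DBInstance S U) : DBInstance S U :=
  fun P => {u | q P ≤ Nat.card {i : Fin n // u ∈ D i P}}

/-- A quota rule lifts a functional dependency on `P` iff its quota for `P`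
exceeds `n/2` (i.e. `2·q_P > n`). -/
theorem quota_lifts_functional_dependency {S : Schema} {U : Type} {n : ℕ}
    (P : S.Sym) (k : ℕ) (hk : k < S.arity P) (a b : U) (hab : a ≠ b)
    (q : S.Sym → ℕ) :
    (∀ D : Fin n → DBInstance S U,
      (∀ i, SatFD P k (D i)) → SatFD P k (quotaRule q D)) ↔ 2 * q P > n := by
  classical
  constructor
  · intro hlift
    by_contra hle
    push_neg at hle
    have hqn : q P ≤ n := by omega
    set u₀ : Fin (S.arity P) → U := fun _ => a with hu₀
    set v₀ : Fin (S.arity P) → U := fun i => if (i : ℕ) < k then a else b with hv₀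
    have huv : u₀ ≠ v₀ := by
      intro h
      have := congrFun h ⟨k, hk⟩
      simp [hu₀, hv₀] at this
      exact hab this
    set D : Fin n → DBInstance S U := fun i Q =>
      {w | ((i : ℕ) < q P ∧ w = fun _ => a) ∨
        ((q P ≤ (i : ℕ) ∧ (i : ℕ) < 2 * q P) ∧ w = fun j : Fin (S.arity Q) => if (j : ℕ) < k then a else b)}
      with hDdef
    have hFD : ∀ i, SatFD P k (D i) := by
      intro i u hu v hv _
      rcases hu with ⟨h1, rfl⟩ | ⟨h1, rfl⟩ <;> rcases hv with ⟨h2, rfl⟩ | ⟨h2, rfl⟩ <;>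
        first | rfl | omega
    have hmemu : ∀ i : Fin n, u₀ ∈ D i P ↔ (i : ℕ) < q P := by
      intro i
      constructor
      · rintro (⟨h1, _⟩ | ⟨h1, h2⟩)
        · exact h1
        · exact absurd h2 huv
      · intro h; exact Or.inl ⟨h, rfl⟩
    have hmemv : ∀ i : Fin n, v₀ ∈ D i P ↔ (q P ≤ (i : ℕ) ∧ (i : ℕ) < 2 * q P) := by
      intro i
      constructor
      · rintro (⟨h1, h2⟩ | ⟨h1, _⟩)
        · exact absurd h2.symm huv
        · exact h1
      · intro h; exact Or.inr ⟨h, rfl⟩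
    have hcardu : q P ≤ Nat.card {i : Fin n // u₀ ∈ D i P} := by
      have : Nat.card (Fin (q P)) ≤ Nat.card {i : Fin n // u₀ ∈ D i P} := by
        apply Nat.card_le_card_of_injective
          (fun j => ⟨⟨(j : ℕ), lt_of_lt_of_le j.2 hqn⟩, (hmemu _).2 j.2⟩)
        intro x y hxy
        apply Fin.ext
        exact congrArg (fun z : {i : Fin n // u₀ ∈ D i P} => (z.1 : ℕ)) hxy
      simpa using this
    have hcardv : q P ≤ Nat.card {i : Fin n // v₀ ∈ D i P} := by
      have : Nat.card (Fin (q P)) ≤ Nat.card {i : Fin n // v₀ ∈ D i P} := by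
        apply Nat.card_le_card_of_injective
          (fun j => ⟨⟨q P + (j : ℕ), by omega⟩, (hmemv _).2 (by simp; omega)⟩)
        intro x y hxy
        apply Fin.ext
        have := congrArg (fun z : {i : Fin n // v₀ ∈ D i P} => (z.1 : ℕ)) hxy
        simpa using this
      simpa using this
    have heq : u₀ = v₀ := by
      apply hlift D hFD u₀ hcardu v₀ hcardv
      intro i hi
      simp [hu₀, hv₀, hi]
    exact huv heq
  · intro hq D hFD u hu v hv hagree
    have hA : Nat.card {i : Fin n // u ∈ D i P}
        = (Finset.univ.filter (fun i => u ∈ D i P)).card := by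
      rw [Nat.card_eq_fintype_card, Fintype.card_subtype]
    have hB : Nat.card {i : Fin n // v ∈ D i P}
        = (Finset.univ.filter (fun i => v ∈ D i P)).card := by
      rw [Nat.card_eq_fintype_card, Fintype.card_subtype]
    set A := Finset.univ.filter (fun i : Fin n => u ∈ D i P) with hAd
    set B := Finset.univ.filter (fun i : Fin n => v ∈ D i P) with hBd
    have hu' : q P ≤ A.card := by rw [← hA]; exact hu
    have hv' : q P ≤ B.card := by rw [← hB]; exact hv
    have hun : (A ∪ B).card ≤ n := by
      have := Finset.card_le_univ (A ∪ B)
      simpa using this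
    have hsum : (A ∪ B).card + (A ∩ B).card = A.card + B.card :=
      Finset.card_union_add_card_inter A B
    have hpos : 0 < (A ∩ B).card := by omega
    obtain ⟨i, hi⟩ := Finset.card_pos.1 hpos
    rw [Finset.mem_inter, hAd, hBd, Finset.mem_filter, Finset.mem_filter] at hi
    exact hFD i u hi.1.2 v hi.2.2 hagree
end

section
/- Every grounded aggregation procedure lifts any value constraint: if all individual instances satisfy the constraint that the k-th coordinate of every tuple in P belongs to the (common, fixed across agents) interpretation of P_v, then the aggregated instance satisfies it as well. -/
/-- Every grounded aggregation procedure lifts any value constraint: if `P_v` has the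
same interpretation (determined by the set `C`) in all individual instances, and each
individual instance satisfies the constraint that the `k`-th coordinate of every tuple
in `P` lies in `C`, then so does the aggregated instance. -/
theorem grounded_lifts_value_constraint {S : Schema} {U : Type} {n : ℕ}
    (F : (Fin n → DBInstance S U) → DBInstance S U) (hF : Grounded F)
    (P Pv : S.Sym) (k : Fin (S.arity P)) (hv : 0 < S.arity Pv) (C : Set U)
    (D : Fin n → DBInstance S U)
    (hCommon : ∀ i : Fin n, D i Pv = {t | t ⟨0, hv⟩ ∈ C})
    (hsat : ∀ i : Fin n, ∀ u ∈ D i P, u k ∈ C) :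
    ∀ u ∈ F D P, u k ∈ C := by
  intro u hu
  obtain ⟨_, ⟨i, rfl⟩, hi⟩ := hF D P hu
  exact hsat i u hi
end

section
/- For queries in the positive universal fragment (built from atoms using only conjunction and universal quantification, under active-domain semantics), the intersection of the individual answers is contained in the answer on the intersection of the instances: ⋂_i ans(D_i, φ) ⊆ ans(⋂_i D_i, φ). -/
/-- The positive universal fragment: atoms, conjunction, universal quantification;
variables indexed by `ℕ`. -/
inductive PosAll (S : Schema) : Type
  | atom (P : S.Sym) (t : Fin (S.arity P) → ℕ)
  | and (φ ψ : PosAll S)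
  | all (x : ℕ) (φ : PosAll S)

/-- Active-domain satisfaction: universal quantifiers range over `adom D`. -/
def allSat {S : Schema} {U : Type} (D : DBInstance S U) (σ : ℕ → U) : PosAll S → Prop
  | .atom P t => (fun i => σ (t i)) ∈ D P
  | .and φ ψ => allSat D σ φ ∧ allSat D σ ψ
  | .all x φ => ∀ u ∈ adom D, allSat D (Function.update σ x u) φ

/-- The answer to query `φ` on `D`: the set of assignments satisfying `φ`. -/
def ansAll {S : Schema} {U : Type} (D : DBInstance S U) (φ : PosAll S) : Set (ℕ → U) :=
  {σ | allSat D σ φ}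

/-- The symbolwise intersection of a profile of instances. -/
def interInst {S : Schema} {U : Type} {n : ℕ} (D : Fin n → DBInstance S U) :
    DBInstance S U := fun P => ⋂ i, D i P


lemma adom_inter_sub {S : Schema} {U : Type} {n : ℕ} (D : Fin n → DBInstance S U)
    (i : Fin n) : adom (interInst D) ⊆ adom (D i) := by
  rintro u ⟨P, t, ht, j, hj⟩
  exact ⟨P, t, Set.mem_iInter.mp ht i, j, hj⟩

lemma sat_inter {S : Schema} {U : Type} {n : ℕ} (D : Fin n → DBInstance S U)
    (φ : PosAll S) (σ : ℕ → U) (h : ∀ i, allSat (D i) σ φ) :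
    allSat (interInst D) σ φ := by
  induction φ generalizing σ with
  | atom P t => exact Set.mem_iInter.mpr fun i => h i
  | and φ ψ ih1 ih2 => exact ⟨ih1 σ fun i => (h i).1, ih2 σ fun i => (h i).2⟩
  | all x φ ih =>
    intro u hu
    exact ih _ fun i => h i u (adom_inter_sub D i hu)

/-- For positive universal queries, the intersection of the individual answers is
contained in the answer on the intersection of the instances. -/
theorem ans_inter_posAll {S : Schema} {U : Type} {n : ℕ}
    (D : Fin n → DBInstance S U) (φ : PosAll S) :
    (⋂ i, ansAll (D i) φ) ⊆ ansAll (interInst D) φ := by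
  intro σ hσ
  exact sat_inter D φ σ fun i => Set.mem_iInter.mp hσ i
end

section
/- There exists a positive universal query φ and two database instances D₁, D₂ satisfying ans(D₁ ∩ D₂, φ) ⊄ ans(D₁, φ) ∩ ans(D₂, φ): with D₁(P) = D₂(P) = {(a,a),(a,b)}, D₁(R) = {c}, D₂(R) = {d}, and φ = ∀y P(x,y), the answer on the intersection is {a} while the intersection of answers is empty. -/
/-- Schema with a binary symbol `P` (index `true`) and a unary symbol `R` (index `false`). -/
def S2 : Schema := ⟨Bool, fun b => cond b 2 1⟩

/-- `D₁` with `D₁(P) = {(a,a),(a,b)}` and `D₁(R) = {c}`. -/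
def D₁ {U : Type} (a b c : U) : DBInstance S2 U := fun P =>
  match P with
  | true => ({![a, a], ![a, b]} : Set (Fin 2 → U))
  | false => ({![c]} : Set (Fin 1 → U))

/-- `D₂` with `D₂(P) = {(a,a),(a,b)}` and `D₂(R) = {d}`. -/
def D₂ {U : Type} (a b d : U) : DBInstance S2 U := fun P =>
  match P with
  | true => ({![a, a], ![a, b]} : Set (Fin 2 → U))
  | false => ({![d]} : Set (Fin 1 → U))

/-- The query `φ(x) = ∀y P(x,y)` with `x` the variable `0` and `y` the variable `1`. -/
def φ₁₇ : PosAll S2 := PosAll.all 1 (PosAll.atom true (![0, 1] : Fin 2 → ℕ))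

/-- A positive universal query whose answer on the intersection of two instances is
not contained in the intersection of the individual answers: on the intersection it
is `{x ↦ a}`, while the intersection of answers is empty. -/
theorem posAll_not_preserved_by_intersection {U : Type} (a b c d : U)
    (hab : a ≠ b) (hac : a ≠ c) (had : a ≠ d) (hbc : b ≠ c) (hbd : b ≠ d)
    (hcd : c ≠ d) :
    ansAll (fun P => D₁ a b c P ∩ D₂ a b d P) φ₁₇ = {σ : ℕ → U | σ 0 = a} ∧
    ansAll (D₁ a b c) φ₁₇ ∩ ansAll (D₂ a b d) φ₁₇ = ∅ ∧
    ¬ ansAll (fun P => D₁ a b c P ∩ D₂ a b d P) φ₁₇ ⊆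
        ansAll (D₁ a b c) φ₁₇ ∩ ansAll (D₂ a b d) φ₁₇ := by

  have hPmem : ∀ g : Fin 2 → U, g ∈ ({![a,a],![a,b]} : Set (Fin 2 → U)) ↔
      (g 0 = a ∧ g 1 = a) ∨ (g 0 = a ∧ g 1 = b) := by
    intro g
    constructor
    · rintro (rfl|rfl) <;> simp
    · rintro (⟨h0,h1⟩|⟨h0,h1⟩)
      · left; funext i; fin_cases i <;> simp [h0,h1]
      · right; funext i; fin_cases i <;> simp [h0,h1]
  have hadomInt : adom (fun P => D₁ a b c P ∩ D₂ a b d P) = {u | u = a ∨ u = b} := by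
    ext u
    constructor
    · rintro ⟨P, t, ht, i, rfl⟩
      cases P with
      | true =>
        rcases (hPmem t).1 ht.1 with ⟨h0,h1⟩|⟨h0,h1⟩ <;> fin_cases i
        · exact Or.inl h0
        · exact Or.inl h1
        · exact Or.inl h0
        · exact Or.inr h1
      | false =>
        exfalso
        have e : (![c] : Fin 1 → U) = ![d] := (ht.1).symm.trans ht.2
        exact hcd (congrFun e 0)
    · rintro (rfl|rfl)
      · exact ⟨true, ![u,u], ⟨Or.inl rfl, Or.inl rfl⟩, (0 : Fin 2), rfl⟩
      · exact ⟨true, ![a,u], ⟨Or.inr rfl, Or.inr rfl⟩, (1 : Fin 2), rfl⟩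
  have hsat : ∀ (D : DBInstance S2 U) (σ : ℕ → U), allSat D σ φ₁₇ ↔
      ∀ u ∈ adom D, (fun i : Fin 2 => Function.update σ 1 u ((![0,1] : Fin 2 → ℕ) i)) ∈ D true := by
    intro D σ; exact Iff.rfl
  have hfun : ∀ (σ : ℕ → U) (u : U),
      (fun i : Fin 2 => Function.update σ 1 u ((![0,1] : Fin 2 → ℕ) i)) = ![σ 0, u] := by
    intro σ u; funext i; fin_cases i <;> simp [Function.update]
  have h1 : ansAll (fun P => D₁ a b c P ∩ D₂ a b d P) φ₁₇ = {σ : ℕ → U | σ 0 = a} := by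
    ext σ
    simp only [ansAll, Set.mem_setOf_eq]
    refine (hsat _ σ).trans ?_
    constructor
    · intro h
      have ha : a ∈ adom (fun P => D₁ a b c P ∩ D₂ a b d P) := by
        rw [hadomInt]; exact Or.inl rfl
      have := (hPmem _).1 (h a ha).1
      rcases this with ⟨h0,-⟩|⟨h0,-⟩ <;> simpa [Function.update] using h0
    · intro h0 u hu
      rw [hadomInt] at hu
      rw [hfun]
      rcases hu with rfl|rfl
      · exact ⟨(hPmem _).2 (Or.inl ⟨by simpa using h0, by simp⟩),
               (hPmem _).2 (Or.inl ⟨by simpa using h0, by simp⟩)⟩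
      · exact ⟨(hPmem _).2 (Or.inr ⟨by simpa using h0, by simp⟩),
               (hPmem _).2 (Or.inr ⟨by simpa using h0, by simp⟩)⟩
  have h2 : ansAll (D₁ a b c) φ₁₇ ∩ ansAll (D₂ a b d) φ₁₇ = ∅ := by
    rw [Set.eq_empty_iff_forall_notMem]
    rintro σ ⟨hσ1, -⟩
    have hc : c ∈ adom (D₁ a b c) := ⟨false, ![c], rfl, (0 : Fin 1), rfl⟩
    have := (hsat _ σ).1 hσ1 c hc
    rw [hfun] at this
    rcases (hPmem _).1 this with ⟨-,h1'⟩|⟨-,h1'⟩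
    · exact hac (by simpa using h1'.symm)
    · exact hbc (by simpa using h1'.symm)
  refine ⟨h1, h2, fun hsub => ?_⟩
  rw [h1, h2] at hsub
  exact hsub (show (fun _ : ℕ => a) ∈ {σ : ℕ → U | σ 0 = a} from rfl)
end
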